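/- Let Ω ⊆ ℝⁿ (n ≥ 2) be a nonempty, open, bounded set and let G ⊆ Ω be Lebesgue-measurable with P_Ω(G) < ∞. Let ξ_k ↘ 0 and let φ_k : Ω → ℝ (k = 1, 2, …) be continuously differentiable with x ↦ |∇φ_k(x)|² and x ↦ W(φ_k(x)) Lebesgue integrable on Ω. Assume φ_k → χ_G almost everywhere in Ω and ∫_Ω [(ξ_k/2)|∇φ_k|² + W(φ_k)/ξ_k] dx → P_Ω(G) as k → ∞. Then ∫_Ω √(2 W(φ_k)) |∇φ_k| dx → P_Ω(G) as k → ∞. -/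

import Mathlib

open MeasureTheory Filter Topology RealInnerProductSpace

/-- The quartic double-well potential `W(s) = 18 s² (1-s)²`. -/
noncomputable def W (s : ℝ) : ℝ := 18 * s ^ 2 * (1 - s) ^ 2

/-- Divergence of a vector field on `ℝⁿ`. -/
noncomputable def vdiv {n : ℕ} (g : EuclideanSpace ℝ (Fin n) → EuclideanSpace ℝ (Fin n))
    (x : EuclideanSpace ℝ (Fin n)) : ℝ :=
  ∑ i, fderiv ℝ g x (EuclideanSpace.single i 1) i

/-- The set of numbers `∫_G div g` over admissible test vector fields `g` (C¹, compactly
supported in `Ω`, with `|g| ≤ 1`), whose supremum is the perimeter of `G` in `Ω`. -/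
noncomputable def perimSet {n : ℕ} (Ω G : Set (EuclideanSpace ℝ (Fin n))) : Set ℝ :=
  { r | ∃ g : EuclideanSpace ℝ (Fin n) → EuclideanSpace ℝ (Fin n),
      ContDiff ℝ 1 g ∧ HasCompactSupport g ∧ tsupport g ⊆ Ω ∧
      (∀ x, ‖g x‖ ≤ 1) ∧ r = ∫ x in G, vdiv g x }

/-- The perimeter `P_Ω(G)` of `G` in `Ω`. -/
noncomputable def perim {n : ℕ} (Ω G : Set (EuclideanSpace ℝ (Fin n))) : ℝ :=
  sSup (perimSet Ω G)

/-!
The energy bounds the target integrals from above: by AM–GM,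
`√(2W(φ)) |∇φ| ≤ (ξ/2) |∇φ|² + W(φ)/ξ` pointwise, so the limsup is at most `P_Ω(G)`.

For the lower bound let `Q` be the primitive of `√(2W)` truncated to `[0, 1]`, so that
`Q(0) = 0`, `Q(1) = 1` and `0 ≤ Q ≤ 1`. For an admissible field `g`, integration by parts gives
`∫_Ω Q(φₖ) div g = -∫_Ω Q'(φₖ) ∇φₖ · g ≤ ∫_Ω √(2W(φₖ)) |∇φₖ|`, and by dominated convergence the
left side tends to `∫_G div g`. Taking the supremum over `g` bounds `P_Ω(G)` by the liminf.
-/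

open Set

lemma le_liminf_of_tendsto_of_le {ι : Type*} {l : Filter ι} [l.NeBot] {a c : ι → ℝ} {r : ℝ}
    (hc : Tendsto c l (𝓝 r)) (hca : ∀ k, c k ≤ a k) (ha : IsBoundedUnder (· ≤ ·) l a) :
    r ≤ liminf a l :=
  hc.liminf_eq ▸ liminf_le_liminf (.of_forall hca) hc.isBoundedUnder_ge ha.isCoboundedUnder_ge

lemma tendsto_of_le_of_le_liminf {ι : Type*} {l : Filter ι} [l.NeBot] {a b : ι → ℝ} {P : ℝ}
    (ha : ∀ k, 0 ≤ a k) (hab : ∀ k, a k ≤ b k) (hb : Tendsto b l (𝓝 P)) (hP : P ≤ liminf a l) :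
    Tendsto a l (𝓝 P) := by
  have hbdd : IsBoundedUnder (· ≤ ·) l a := hb.isBoundedUnder_le.mono_le (.of_forall hab)
  refine tendsto_of_le_liminf_of_limsup_le hP ?_ hbdd (isBoundedUnder_of ⟨0, ha⟩)
  exact hb.limsup_eq ▸ limsup_le_limsup (.of_forall hab)
    (isBoundedUnder_of ⟨0, ha⟩).isCoboundedUnder_le hb.isBoundedUnder_le

lemma W_nonneg (s : ℝ) : 0 ≤ W s := by unfold W; positivity

lemma continuous_W : Continuous W := by unfold W; fun_prop

lemma sqrt_two_mul_mul_le {ξ w : ℝ} (hξ : 0 < ξ) (hw : 0 ≤ w) (t : ℝ) :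
    Real.sqrt (2 * w) * t ≤ ξ / 2 * t ^ 2 + w / ξ := by
  set s := Real.sqrt (2 * w)
  have hs : s ^ 2 = 2 * w := Real.sq_sqrt (by linarith)
  have hsq : ξ / 2 * t ^ 2 + w / ξ - s * t = (ξ * t - s) ^ 2 / (2 * ξ) := by
    field_simp; linear_combination (-1 : ℝ) * hs
  nlinarith [div_nonneg (sq_nonneg (ξ * t - s)) (by positivity : (0 : ℝ) ≤ 2 * ξ)]

/-- On `[0, 1]` this is `√(2W)`; the truncation makes its primitive constant outside `[0, 1]`. -/
noncomputable def wellDensity (s : ℝ) : ℝ := 6 * max 0 (s - s ^ 2)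

noncomputable def wellPrimitive (t : ℝ) : ℝ := ∫ s in (0 : ℝ)..t, wellDensity s

lemma wellDensity_nonneg (s : ℝ) : 0 ≤ wellDensity s := by unfold wellDensity; positivity

lemma continuous_wellDensity : Continuous wellDensity := by unfold wellDensity; fun_prop

lemma wellDensity_le_sqrt_two_mul_W (s : ℝ) : wellDensity s ≤ Real.sqrt (2 * W s) := by
  rw [show 2 * W s = (6 * (s - s ^ 2)) ^ 2 by unfold W; ring, Real.sqrt_sq_eq_abs, abs_mul,
    abs_of_pos (by norm_num : (0 : ℝ) < 6)]
  exact mul_le_mul_of_nonneg_left (max_le (abs_nonneg _) (le_abs_self _)) (by norm_num)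

lemma wellDensity_eq_zero_of_notMem_Ioo {s : ℝ} (hs : s ∉ Ioo 0 1) : wellDensity s = 0 := by
  rw [mem_Ioo, not_and_or, not_lt, not_lt] at hs
  unfold wellDensity
  rw [max_eq_left (by rcases hs with hs | hs <;> nlinarith), mul_zero]

lemma hasDerivAt_wellPrimitive (t : ℝ) : HasDerivAt wellPrimitive (wellDensity t) t :=
  intervalIntegral.integral_hasDerivAt_right (continuous_wellDensity.intervalIntegrable _ _)
    (continuous_wellDensity.stronglyMeasurableAtFilter _ _) continuous_wellDensity.continuousAt

lemma contDiff_wellPrimitive : ContDiff ℝ 1 wellPrimitive :=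
  contDiff_one_iff_deriv.2 ⟨fun t => (hasDerivAt_wellPrimitive t).differentiableAt,
    by simpa only [funext fun t => (hasDerivAt_wellPrimitive t).deriv] using continuous_wellDensity⟩

lemma monotone_wellPrimitive : Monotone wellPrimitive :=
  monotone_of_hasDerivAt_nonneg hasDerivAt_wellPrimitive wellDensity_nonneg

lemma integral_wellDensity_eq_zero {a b : ℝ} (h : uIcc a b ∩ Ioo 0 1 = ∅) :
    ∫ s in a..b, wellDensity s = 0 := by
  refine (intervalIntegral.integral_congr (g := 0) fun s hs => ?_).trans (by simp)
  exact wellDensity_eq_zero_of_notMem_Ioo fun h' => h.subset ⟨hs, h'⟩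

lemma wellPrimitive_of_nonpos {t : ℝ} (ht : t ≤ 0) : wellPrimitive t = 0 :=
  integral_wellDensity_eq_zero <| by
    rw [uIcc_of_ge ht, eq_empty_iff_forall_notMem]
    exact fun s hs => by linarith [hs.1.2, hs.2.1]

lemma wellPrimitive_one : wellPrimitive 1 = 1 := by
  have h : EqOn wellDensity (fun s => 6 * s - 6 * s ^ 2) (uIcc 0 1) := by
    intro s hs
    rw [uIcc_of_le zero_le_one] at hs
    simp only [wellDensity]
    rw [max_eq_right (by nlinarith [hs.1, hs.2])]; ring
  rw [wellPrimitive, intervalIntegral.integral_congr h, intervalIntegral.integral_sub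
    ((by fun_prop : Continuous fun s : ℝ => 6 * s).intervalIntegrable _ _)
    ((by fun_prop : Continuous fun s : ℝ => 6 * s ^ 2).intervalIntegrable _ _),
    intervalIntegral.integral_const_mul, intervalIntegral.integral_const_mul]
  norm_num [integral_pow, integral_id]

lemma wellPrimitive_of_one_le {t : ℝ} (ht : 1 ≤ t) : wellPrimitive t = 1 := by
  rw [wellPrimitive, ← intervalIntegral.integral_add_adjacent_intervals
    (continuous_wellDensity.intervalIntegrable 0 1) (continuous_wellDensity.intervalIntegrable 1 t),
    ← wellPrimitive, wellPrimitive_one, integral_wellDensity_eq_zero, add_zero]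
  rw [uIcc_of_le ht, eq_empty_iff_forall_notMem]
  exact fun s hs => by linarith [hs.1.1, hs.2.2]

lemma wellPrimitive_mem_Icc (t : ℝ) : wellPrimitive t ∈ Icc 0 1 :=
  ⟨wellPrimitive_of_nonpos (min_le_left 0 t) ▸ monotone_wellPrimitive (min_le_right 0 t),
    wellPrimitive_of_one_le (le_max_left 1 t) ▸ monotone_wellPrimitive (le_max_right 1 t)⟩

lemma wellPrimitive_indicator_one {α : Type*} (G : Set α) (x : α) :
    wellPrimitive (G.indicator (fun _ => 1) x) = G.indicator (fun _ => 1) x := by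
  by_cases hx : x ∈ G
  · simp [hx, wellPrimitive_one]
  · simp [hx, wellPrimitive_of_nonpos]

section Euclidean

variable {n : ℕ}

local notation "E" => EuclideanSpace ℝ (Fin n)

lemma sum_apply_single_mul (A : E →L[ℝ] ℝ) (v : E) :
    ∑ i, A (EuclideanSpace.single i 1) * v i = A v := by
  conv_rhs => rw [← (EuclideanSpace.basisFun (Fin n) ℝ).sum_repr v]
  simp [map_sum, mul_comm]

lemma norm_gradient_eq_norm_fderiv (u : E → ℝ) (x : E) : ‖gradient u x‖ = ‖fderiv ℝ u x‖ :=
  (InnerProductSpace.toDual ℝ E).symm.norm_map _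

lemma ContDiff.continuous_vdiv {g : E → E} (hg : ContDiff ℝ 1 g) : Continuous (vdiv g) :=
  continuous_finsetSum _ fun i _ => (EuclideanSpace.proj i).continuous.comp
    ((hg.continuous_fderiv one_ne_zero).clm_apply continuous_const)

lemma HasCompactSupport.vdiv {g : E → E} (hg : HasCompactSupport g) :
    HasCompactSupport (vdiv g) :=
  hg.fderiv (𝕜 := ℝ) |>.comp_left
    (g := fun L : E →L[ℝ] E => ∑ i, L (EuclideanSpace.single i 1) i) (by simp)

lemma perimSet_nonempty (Ω G : Set E) : (perimSet Ω G).Nonempty :=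
  ⟨0, 0, contDiff_const, .zero, by simp, by simp, by simp [vdiv]⟩

end Euclidean

section IntegrationByParts

variable {n : ℕ} {Ω K : Set (EuclideanSpace ℝ (Fin n))}

local notation "E" => EuclideanSpace ℝ (Fin n)

lemma integrable_mul_of_support_subset_isCompact {u h : E → ℝ} (hu : ContinuousOn u Ω)
    (hh : Continuous h) (hK : IsCompact K) (hKΩ : K ⊆ Ω) (hhK : Function.support h ⊆ K) :
    Integrable fun x => u x * h x :=
  (integrableOn_iff_integrable_of_support_subset
    ((Function.support_mul_subset_right _ _).trans hhK)).1
    (((hu.mono hKΩ).mul hh.continuousOn).integrableOn_compact hK)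

theorem setIntegral_mul_vdiv_eq_neg (hΩ : IsOpen Ω) {u : E → ℝ} (hu : ContDiffOn ℝ 1 u Ω)
    {g : E → E} (hg : ContDiff ℝ 1 g) (hgc : HasCompactSupport g) (hgΩ : tsupport g ⊆ Ω) :
    ∫ x in Ω, u x * vdiv g x = -∫ x in Ω, fderiv ℝ u x (g x) := by
  set e : Fin n → E := fun i => EuclideanSpace.single i 1
  have hdu : ∀ x ∈ Ω, DifferentiableAt ℝ u x := fun x hx =>
    (hu.differentiableOn one_ne_zero x hx).differentiableAt (hΩ.mem_nhds hx)
  have hDg : Continuous (fderiv ℝ g) := hg.continuous_fderiv one_ne_zero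
  have hgi (i : Fin n) : ContDiff ℝ 1 fun x => g x i :=
    (EuclideanSpace.proj (𝕜 := ℝ) i).contDiff.comp hg
  have hDgi (i : Fin n) (x v : E) : fderiv ℝ (fun x => g x i) x v = fderiv ℝ g x v i :=
    congrArg (· v) ((EuclideanSpace.proj (𝕜 := ℝ) i).hasFDerivAt.comp x
      (hg.differentiable one_ne_zero x).hasFDerivAt).fderiv
  have hsupp_gi (i : Fin n) : Function.support (fun x => g x i) ⊆ tsupport g :=
    (Function.support_comp_subset (map_zero (EuclideanSpace.proj i)) g).trans (subset_tsupport g)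
  have hint_Dg (i : Fin n) : Integrable fun x => u x * fderiv ℝ g x (e i) i :=
    integrable_mul_of_support_subset_isCompact hu.continuousOn
      ((EuclideanSpace.proj i).continuous.comp (hDg.clm_apply continuous_const)) hgc hgΩ
      fun x hx => support_fderiv_subset ℝ fun h => hx (by simp [h])
  have hint_Du (i : Fin n) : Integrable fun x => fderiv ℝ u x (e i) * g x i :=
    integrable_mul_of_support_subset_isCompact
      ((hu.continuousOn_fderiv_of_isOpen hΩ le_rfl).clm_apply continuousOn_const)
      (hgi i).continuous hgc hgΩ (hsupp_gi i)
  have hparts (i : Fin n) :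
      ∫ x, u x * fderiv ℝ g x (e i) i = -∫ x, fderiv ℝ u x (e i) * g x i := by
    simp_rw [← hDgi]
    refine integral_mul_fderiv_eq_neg_fderiv_mul_of_integrable (hint_Du i) ?_
      (integrable_mul_of_support_subset_isCompact hu.continuousOn (hgi i).continuous hgc hgΩ
        (hsupp_gi i))
      (fun x hx => hdu x (hgΩ (tsupport_comp_subset (map_zero (EuclideanSpace.proj i)) g hx)))
      (fun x _ => (hgi i).differentiable one_ne_zero x)
    simpa only [hDgi] using hint_Dg i
  have hvdiv : ∀ x ∉ Ω, vdiv g x = 0 := fun x hx => by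
    simp [vdiv, image_eq_zero_of_notMem_tsupport fun h => hx (hgΩ (tsupport_fderiv_subset ℝ h))]
  calc ∫ x in Ω, u x * vdiv g x
      = ∑ i, ∫ x, u x * fderiv ℝ g x (e i) i := by
        rw [setIntegral_eq_integral_of_forall_compl_eq_zero fun x hx => by simp [hvdiv x hx]]
        simp_rw [vdiv, Finset.mul_sum]
        exact integral_finsetSum _ fun i _ => hint_Dg i
    _ = -∑ i, ∫ x, fderiv ℝ u x (e i) * g x i := by
        simp only [hparts, Finset.sum_neg_distrib]
    _ = -∫ x in Ω, fderiv ℝ u x (g x) := by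
        rw [setIntegral_eq_integral_of_forall_compl_eq_zero fun x hx => by
          simp [image_eq_zero_of_notMem_tsupport fun h => hx (hgΩ h)]]
        simp_rw [← sum_apply_single_mul (fderiv ℝ u _) (g _)]
        rw [integral_finsetSum _ fun i _ => hint_Du i]

end IntegrationByParts

theorem tendsto_setIntegral_wellPrimitive_mul {α : Type*} [MeasurableSpace α] {μ : Measure α}
    {Ω G : Set α} (hG : MeasurableSet G) (hGΩ : G ⊆ Ω) {φ : ℕ → α → ℝ}
    (hφ : ∀ k, AEStronglyMeasurable (φ k) (μ.restrict Ω))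
    (hae : ∀ᵐ x ∂μ.restrict Ω, Tendsto (fun k => φ k x) atTop (𝓝 (G.indicator (fun _ => 1) x)))
    {h : α → ℝ} (hh : Integrable h (μ.restrict Ω)) :
    Tendsto (fun k => ∫ x in Ω, wellPrimitive (φ k x) * h x ∂μ) atTop (𝓝 (∫ x in G, h x ∂μ)) := by
  have hlim : ∫ x in Ω, G.indicator (fun _ => 1) x * h x ∂μ = ∫ x in G, h x ∂μ := by
    simp_rw [← Set.indicator_mul_left, one_mul]
    rw [setIntegral_indicator hG, Set.inter_eq_self_of_subset_right hGΩ]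
  rw [← hlim]
  refine tendsto_integral_of_dominated_convergence (fun x => ‖h x‖)
    (fun k => (contDiff_wellPrimitive.continuous.comp_aestronglyMeasurable (hφ k)).mul
      hh.aestronglyMeasurable) hh.norm (fun k => ae_of_all _ fun x => ?_) ?_
  · have h01 := wellPrimitive_mem_Icc (φ k x)
    rw [norm_mul, Real.norm_eq_abs, abs_of_nonneg h01.1]
    exact mul_le_of_le_one_left (norm_nonneg _) h01.2
  · filter_upwards [hae] with x hx
    simpa only [wellPrimitive_indicator_one, Function.comp_def] using
      ((contDiff_wellPrimitive.continuous.tendsto _).comp hx).mul_const (h x)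

section ModicaMortola

variable {n : ℕ} {Ω : Set (EuclideanSpace ℝ (Fin n))} {u : EuclideanSpace ℝ (Fin n) → ℝ}

local notation "E" => EuclideanSpace ℝ (Fin n)

lemma abs_wellDensity_mul_fderiv_le (x : E) {v : E} (hv : ‖v‖ ≤ 1) :
    |wellDensity (u x) * fderiv ℝ u x v| ≤ Real.sqrt (2 * W (u x)) * ‖gradient u x‖ := by
  rw [abs_mul, abs_of_nonneg (wellDensity_nonneg _), norm_gradient_eq_norm_fderiv]
  refine mul_le_mul (wellDensity_le_sqrt_two_mul_W _) ?_ (abs_nonneg _) (Real.sqrt_nonneg _)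
  exact ((fderiv ℝ u x).le_opNorm v).trans (mul_le_of_le_one_right (norm_nonneg _) hv)

lemma integrableOn_sqrt_two_mul_W_mul_norm_gradient (hΩ : IsOpen Ω) (hu : ContDiffOn ℝ 1 u Ω)
    (hgrad : IntegrableOn (fun x => ‖gradient u x‖ ^ 2) Ω)
    (hW : IntegrableOn (fun x => W (u x)) Ω) :
    IntegrableOn (fun x => Real.sqrt (2 * W (u x)) * ‖gradient u x‖) Ω := by
  have hcont : ContinuousOn (fun x => Real.sqrt (2 * W (u x)) * ‖gradient u x‖) Ω := by
    simp_rw [norm_gradient_eq_norm_fderiv]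
    exact ((Real.continuous_sqrt.comp (continuous_const.mul continuous_W)).comp_continuousOn
      hu.continuousOn).mul (hu.continuousOn_fderiv_of_isOpen hΩ le_rfl).norm
  refine ((hgrad.const_mul (1 / 2)).add hW).mono' (hcont.aestronglyMeasurable hΩ.measurableSet)
    (.of_forall fun x => ?_)
  rw [Real.norm_eq_abs, abs_of_nonneg (by positivity)]
  simpa using sqrt_two_mul_mul_le one_pos (W_nonneg (u x)) ‖gradient u x‖

theorem setIntegral_wellPrimitive_mul_vdiv_le (hΩ : IsOpen Ω) (hu : ContDiffOn ℝ 1 u Ω)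
    (hint : IntegrableOn (fun x => Real.sqrt (2 * W (u x)) * ‖gradient u x‖) Ω) {g : E → E}
    (hg : ContDiff ℝ 1 g) (hgc : HasCompactSupport g) (hgΩ : tsupport g ⊆ Ω)
    (hg1 : ∀ x, ‖g x‖ ≤ 1) :
    ∫ x in Ω, wellPrimitive (u x) * vdiv g x ≤
      ∫ x in Ω, Real.sqrt (2 * W (u x)) * ‖gradient u x‖ := by
  have hD : ∀ x ∈ Ω,
      fderiv ℝ (fun x => wellPrimitive (u x)) x = wellDensity (u x) • fderiv ℝ u x :=
    fun x hx => ((hasDerivAt_wellPrimitive _).comp_hasFDerivAt x ((hu.differentiableOn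
      one_ne_zero x hx).differentiableAt (hΩ.mem_nhds hx)).hasFDerivAt).fderiv
  rw [setIntegral_mul_vdiv_eq_neg (u := fun x => wellPrimitive (u x)) hΩ
    (contDiff_wellPrimitive.comp_contDiffOn hu) hg hgc hgΩ]
  refine (neg_le_abs _).trans ?_
  rw [← Real.norm_eq_abs]
  refine norm_integral_le_of_norm_le hint
    (ae_restrict_of_forall_mem hΩ.measurableSet fun x hx => ?_)
  rw [hD x hx]
  exact abs_wellDensity_mul_fderiv_le x (hg1 x)

end ModicaMortola

theorem sqrt_energy_tendsto_perimeter_general {n : ℕ}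
    (Ω : Set (EuclideanSpace ℝ (Fin n))) (hΩopen : IsOpen Ω)
    (G : Set (EuclideanSpace ℝ (Fin n))) (hGmeas : MeasurableSet G) (hGΩ : G ⊆ Ω)
    (ξ : ℕ → ℝ) (hξpos : ∀ k, 0 < ξ k)
    (φ : ℕ → EuclideanSpace ℝ (Fin n) → ℝ)
    (hφ : ∀ k, ContDiffOn ℝ 1 (φ k) Ω)
    (hgradInt : ∀ k, IntegrableOn (fun x => ‖gradient (φ k) x‖ ^ 2) Ω)
    (hWInt : ∀ k, IntegrableOn (fun x => W (φ k x)) Ω)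
    (hae : ∀ᵐ x ∂(volume.restrict Ω),
      Tendsto (fun k => φ k x) atTop (𝓝 (G.indicator (fun _ => (1 : ℝ)) x)))
    (henergy : Tendsto
      (fun k => ∫ x in Ω, (ξ k / 2 * ‖gradient (φ k) x‖ ^ 2 + W (φ k x) / ξ k))
      atTop (𝓝 (perim Ω G))) :
    Tendsto (fun k => ∫ x in Ω, Real.sqrt (2 * W (φ k x)) * ‖gradient (φ k) x‖)
      atTop (𝓝 (perim Ω G)) := by
  have hint k :=
    integrableOn_sqrt_two_mul_W_mul_norm_gradient hΩopen (hφ k) (hgradInt k) (hWInt k)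
  have hle_energy (k : ℕ) : ∫ x in Ω, Real.sqrt (2 * W (φ k x)) * ‖gradient (φ k) x‖ ≤
      ∫ x in Ω, (ξ k / 2 * ‖gradient (φ k) x‖ ^ 2 + W (φ k x) / ξ k) :=
    setIntegral_mono_on (hint k) (((hgradInt k).const_mul _).add ((hWInt k).div_const _))
      hΩopen.measurableSet fun x _ => sqrt_two_mul_mul_le (hξpos k) (W_nonneg _) _
  have hnonneg (k : ℕ) : 0 ≤ ∫ x in Ω, Real.sqrt (2 * W (φ k x)) * ‖gradient (φ k) x‖ :=
    setIntegral_nonneg hΩopen.measurableSet fun x _ => by positivity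
  refine tendsto_of_le_of_le_liminf hnonneg hle_energy henergy ?_
  refine csSup_le (perimSet_nonempty Ω G) ?_
  rintro _ ⟨g, hg, hgc, hgΩ, hg1, rfl⟩
  refine le_liminf_of_tendsto_of_le (tendsto_setIntegral_wellPrimitive_mul hGmeas hGΩ
    (fun k => (hφ k).continuousOn.aestronglyMeasurable hΩopen.measurableSet) hae
    (hg.continuous_vdiv.integrable_of_hasCompactSupport hgc.vdiv).integrableOn)
    (fun k => setIntegral_wellPrimitive_mul_vdiv_le hΩopen (hφ k) (hint k) hg hgc hgΩ hg1) ?_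
  exact henergy.isBoundedUnder_le.mono_le (.of_forall hle_energy)

theorem sqrt_energy_tendsto_perimeter {n : ℕ} (hn : 2 ≤ n)
    (Ω : Set (EuclideanSpace ℝ (Fin n))) (hΩne : Ω.Nonempty) (hΩopen : IsOpen Ω)
    (hΩbdd : Bornology.IsBounded Ω)
    (G : Set (EuclideanSpace ℝ (Fin n))) (hGmeas : MeasurableSet G) (hGΩ : G ⊆ Ω)
    (hPfin : BddAbove (perimSet Ω G))
    (ξ : ℕ → ℝ) (hξpos : ∀ k, 0 < ξ k) (hξanti : StrictAnti ξ)
    (hξ0 : Tendsto ξ atTop (𝓝 0))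
    (φ : ℕ → EuclideanSpace ℝ (Fin n) → ℝ)
    (hφ : ∀ k, ContDiffOn ℝ 1 (φ k) Ω)
    (hgradInt : ∀ k, IntegrableOn (fun x => ‖gradient (φ k) x‖ ^ 2) Ω)
    (hWInt : ∀ k, IntegrableOn (fun x => W (φ k x)) Ω)
    (hae : ∀ᵐ x ∂(volume.restrict Ω),
      Tendsto (fun k => φ k x) atTop (𝓝 (G.indicator (fun _ => (1 : ℝ)) x)))
    (henergy : Tendsto
      (fun k => ∫ x in Ω, (ξ k / 2 * ‖gradient (φ k) x‖ ^ 2 + W (φ k x) / ξ k))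
      atTop (𝓝 (perim Ω G))) :
    Tendsto (fun k => ∫ x in Ω, Real.sqrt (2 * W (φ k x)) * ‖gradient (φ k) x‖)
      atTop (𝓝 (perim Ω G)) :=
  sqrt_energy_tendsto_perimeter_general Ω hΩopen G hGmeas hGΩ ξ hξpos φ hφ hgradInt hWInt hae
    henergy
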